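/- If a0 lies in the interior of the Newton polytope P, then the set U₋ = {x ∈ ℝ^m : Ψ(x) < 1} is a nonempty open subset of ℝ^m. -/

import Mathlib

/-! Since `a0` is interior to `conv(A)`, `Φ0(x) = Φ(x) - ⟪a0, x⟫ - log α0` grows at least linearly
at infinity, so it has a minimiser `x`. The gradient of `Φ0` is `μ - a0`, hence `μ(x) = a0`, the
quadratic term of `Ψ(x)` vanishes and `Ψ(x) = (K(x)/K0(x))^{m/2} < 1`. For openness, `G(x)` is the
matrix of the Adler–Taylor form, which is definite because `A` affinely spans `ℝ^m`; so `G⁻¹`, and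
with it `Ψ`, is continuous. -/

open scoped BigOperators RealInnerProductSpace
open Finset

noncomputable section

/-- `ℝ^m` with the standard (Euclidean) inner product. -/
abbrev Vm (m : ℕ) := EuclideanSpace ℝ (Fin m)

/-- The diagonal covariance `K(x) = Σ_{a∈A} α_a² exp(2⟨a,x⟩)`. -/
def covK {m : ℕ} (A : Finset (Vm m)) (α : Vm m → ℝ) (x : Vm m) : ℝ :=
  ∑ a ∈ A, (α a) ^ 2 * Real.exp (2 * ⟪a, x⟫)

/-- The potential `Φ(x) = (1/2) log K(x)`. -/
def pot {m : ℕ} (A : Finset (Vm m)) (α : Vm m → ℝ) (x : Vm m) : ℝ :=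
  (1 / 2) * Real.log (covK A α x)

/-- The weights `λ_a(x) = α_a² exp(2⟨a,x⟩)/K(x)`. -/
def wt {m : ℕ} (A : Finset (Vm m)) (α : Vm m → ℝ) (a x : Vm m) : ℝ :=
  (α a) ^ 2 * Real.exp (2 * ⟪a, x⟫) / covK A α x

/-- The moment map `μ(x) = Σ_{a∈A} λ_a(x) • a`. -/
def mmap {m : ℕ} (A : Finset (Vm m)) (α : Vm m → ℝ) (x : Vm m) : Vm m :=
  ∑ a ∈ A, wt A α a x • a

/-- The Adler–Taylor quadratic form `g_x(v) = Σ_{a∈A} λ_a(x)·⟨a − μ(x), v⟩²`. -/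
def atForm {m : ℕ} (A : Finset (Vm m)) (α : Vm m → ℝ) (x v : Vm m) : ℝ :=
  ∑ a ∈ A, wt A α a x * ⟪a - mmap A α x, v⟫ ^ 2


/-- The matrix `G(x) = Σ_{a∈A} λ_a(x)·(a − μ(x))(a − μ(x))ᵀ`. -/
def Gmat {m : ℕ} (A : Finset (Vm m)) (α : Vm m → ℝ) (x : Vm m) :
    Matrix (Fin m) (Fin m) ℝ :=
  Matrix.of fun i j => ∑ a ∈ A, wt A α a x * ((a - mmap A α x) i * (a - mmap A α x) j)

/-- The quantity `⟨μ(x) − a0, G(x)⁻¹(μ(x) − a0)⟩`. -/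
def qform {m : ℕ} (A : Finset (Vm m)) (α : Vm m → ℝ) (a0 : Vm m) (x : Vm m) : ℝ :=
  dotProduct (fun i => (mmap A α x - a0) i)
    ((Gmat A α x)⁻¹.mulVec fun i => (mmap A α x - a0) i)

/-- `f0(x) = α0·exp(⟨a0,x⟩)`. -/
def f0e {m : ℕ} (a0 : Vm m) (α0 : ℝ) (x : Vm m) : ℝ := α0 * Real.exp ⟪a0, x⟫

/-- `K0(x) = K(x) + f0(x)²`. -/
def K0e {m : ℕ} (A : Finset (Vm m)) (α : Vm m → ℝ) (a0 : Vm m) (α0 : ℝ) (x : Vm m) : ℝ :=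
  covK A α x + f0e a0 α0 x ^ 2

/-- `Φ0(x) = Φ(x) − log f0(x)`. -/
def Phi0e {m : ℕ} (A : Finset (Vm m)) (α : Vm m → ℝ) (a0 : Vm m) (α0 : ℝ) (x : Vm m) : ℝ :=
  pot A α x - Real.log (f0e a0 α0 x)

/-- `Ψ(x) = (K(x)/K0(x))^{m/2}·sqrt(1 + (f0(x)²/K0(x))·⟨μ(x) − a0, G(x)⁻¹(μ(x) − a0)⟩)`. -/
def PsiF {m : ℕ} (A : Finset (Vm m)) (α : Vm m → ℝ) (a0 : Vm m) (α0 : ℝ) (x : Vm m) : ℝ :=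
  (covK A α x / K0e A α a0 α0 x) ^ ((m : ℝ) / 2) *
    Real.sqrt (1 + (f0e a0 α0 x ^ 2 / K0e A α a0 α0 x) * qform A α a0 x)

open Filter
open scoped Matrix

variable {m : ℕ} {A : Finset (Vm m)} {α : Vm m → ℝ} {a0 : Vm m} {α0 : ℝ}

theorem covK_pos (hA : A.Nonempty) (hα : ∀ a ∈ A, 0 < α a) (x : Vm m) : 0 < covK A α x :=
  sum_pos (fun a ha => mul_pos (pow_pos (hα a ha) 2) (Real.exp_pos _)) hA

theorem wt_pos (hA : A.Nonempty) (hα : ∀ a ∈ A, 0 < α a) {a : Vm m} (ha : a ∈ A) (x : Vm m) :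
    0 < wt A α a x :=
  div_pos (mul_pos (pow_pos (hα a ha) 2) (Real.exp_pos _)) (covK_pos hA hα x)

theorem f0e_pos (hα0 : 0 < α0) (x : Vm m) : 0 < f0e a0 α0 x :=
  mul_pos hα0 (Real.exp_pos _)

theorem covK_lt_K0e (hα0 : 0 < α0) (x : Vm m) : covK A α x < K0e A α a0 α0 x :=
  lt_add_of_pos_right _ (pow_pos (f0e_pos hα0 x) 2)

theorem K0e_pos (hA : A.Nonempty) (hα : ∀ a ∈ A, 0 < α a) (hα0 : 0 < α0) (x : Vm m) :
    0 < K0e A α a0 α0 x :=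
  (covK_pos hA hα x).trans (covK_lt_K0e hα0 x)

theorem log_f0e (hα0 : 0 < α0) (x : Vm m) : Real.log (f0e a0 α0 x) = Real.log α0 + ⟪a0, x⟫ := by
  rw [f0e, Real.log_mul hα0.ne' (Real.exp_pos _).ne', Real.log_exp]

theorem hasFDerivAt_covK (x : Vm m) :
    HasFDerivAt (covK A α)
      (∑ a ∈ A, (2 * ((α a) ^ 2 * Real.exp (2 * ⟪a, x⟫))) • innerSL ℝ a) x := by
  refine HasFDerivAt.fun_sum fun a _ => ?_
  have hlin : HasFDerivAt (fun x : Vm m => 2 * ⟪a, x⟫) ((2 : ℝ) • innerSL ℝ a) x := by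
    simpa using (innerSL ℝ a).hasFDerivAt.const_mul (2 : ℝ)
  refine (hlin.exp.const_mul ((α a) ^ 2)).congr_fderiv ?_
  rw [smul_smul, smul_smul]
  ring_nf

theorem hasFDerivAt_pot (hA : A.Nonempty) (hα : ∀ a ∈ A, 0 < α a) (x : Vm m) :
    HasFDerivAt (pot A α) (innerSL ℝ (mmap A α x)) x := by
  have hK := covK_pos hA hα x
  refine ((hasFDerivAt_covK x).log hK.ne' |>.const_mul (1 / 2 : ℝ)).congr_fderiv ?_
  simp only [mmap, map_sum, map_smul, smul_sum, smul_smul, wt]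
  refine sum_congr rfl fun a _ => ?_
  congr 1
  field_simp

theorem hasFDerivAt_Phi0e (hA : A.Nonempty) (hα : ∀ a ∈ A, 0 < α a) (hα0 : 0 < α0)
    (x : Vm m) : HasFDerivAt (Phi0e A α a0 α0) (innerSL ℝ (mmap A α x - a0)) x := by
  have hlin : HasFDerivAt (fun y : Vm m => Real.log α0 + ⟪a0, y⟫) (innerSL ℝ a0) x := by
    simpa using (innerSL ℝ a0).hasFDerivAt.const_add (Real.log α0)
  have hPhi0e : Phi0e A α a0 α0 = fun y => pot A α y - (Real.log α0 + ⟪a0, y⟫) := by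
    funext y
    rw [Phi0e, log_f0e hα0]
  rw [hPhi0e, map_sub]
  exact (hasFDerivAt_pot hA hα x).sub hlin

theorem mmap_eq_of_isLocalMin_Phi0e (hA : A.Nonempty) (hα : ∀ a ∈ A, 0 < α a) (hα0 : 0 < α0)
    {x : Vm m} (hx : IsLocalMin (Phi0e A α a0 α0) x) : mmap A α x = a0 := by
  have hcrit := hx.hasFDerivAt_eq_zero (hasFDerivAt_Phi0e hA hα hα0 x)
  have hself := congrArg (fun L => L (mmap A α x - a0)) hcrit
  simp only [innerSL_apply_apply, zero_apply] at hself
  exact sub_eq_zero.1 (inner_self_eq_zero.1 hself)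

theorem exists_pos_forall_exists_inner_add_le_of_mem_interior_convexHull {E : Type*}
    [NormedAddCommGroup E] [InnerProductSpace ℝ E] {s : Set E} {p : E}
    (hp : p ∈ interior (convexHull ℝ s)) :
    ∃ ε > 0, ∀ x : E, ∃ b ∈ s, ⟪x, p⟫ + ε * ‖x‖ ≤ ⟪x, b⟫ := by
  obtain ⟨ε, hε, hball⟩ :=
    Metric.nhds_basis_closedBall.mem_iff.1 (mem_interior_iff_mem_nhds.1 hp)
  refine ⟨ε, hε, fun x => ?_⟩
  by_contra! hlt
  -- `y` is the point of the ball around `p` furthest in the direction `x`.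
  set y := p + (ε / ‖x‖) • x
  have hy : y ∈ convexHull ℝ s := by
    refine hball (mem_closedBall_iff_norm.2 ?_)
    rcases eq_or_ne x 0 with rfl | hx
    · simpa [y] using hε.le
    · rw [add_sub_cancel_left, norm_smul, Real.norm_of_nonneg (by positivity),
        div_mul_cancel₀ _ (norm_ne_zero_iff.2 hx)]
  have hyx : ⟪x, y⟫ = ⟪x, p⟫ + ε * ‖x‖ := by
    rcases eq_or_ne x 0 with rfl | hx
    · simp
    · rw [inner_add_right, real_inner_smul_right, real_inner_self_eq_norm_sq]
      field_simp
  have hhull : convexHull ℝ s ⊆ {z | ⟪x, z⟫ < ⟪x, p⟫ + ε * ‖x‖} :=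
    convexHull_min hlt (convex_halfSpace_lt (innerₛₗ ℝ x).isLinear _)
  exact (hhull hy).ne hyx

theorem log_add_inner_le_pot (hα : ∀ a ∈ A, 0 < α a) {b : Vm m} (hb : b ∈ A) (x : Vm m) :
    Real.log (α b) + ⟪b, x⟫ ≤ pot A α x := by
  have hterm : 0 < (α b) ^ 2 * Real.exp (2 * ⟪b, x⟫) :=
    mul_pos (pow_pos (hα b hb) 2) (Real.exp_pos _)
  have hle : (α b) ^ 2 * Real.exp (2 * ⟪b, x⟫) ≤ covK A α x :=
    single_le_sum (f := fun a => (α a) ^ 2 * Real.exp (2 * ⟪a, x⟫))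
      (fun a _ => by positivity) hb
  have hlog := Real.log_le_log hterm hle
  rw [Real.log_mul (pow_pos (hα b hb) 2).ne' (Real.exp_pos _).ne', Real.log_exp,
    Real.log_pow] at hlog
  rw [pot]
  push_cast at hlog
  linarith

theorem tendsto_Phi0e_cocompact (hA : A.Nonempty) (hα : ∀ a ∈ A, 0 < α a) (hα0 : 0 < α0)
    (ha0 : a0 ∈ interior (convexHull ℝ (A : Set (Vm m)))) :
    Tendsto (Phi0e A α a0 α0) (cocompact (Vm m)) atTop := by
  obtain ⟨ε, hε, hsupport⟩ := exists_pos_forall_exists_inner_add_le_of_mem_interior_convexHull ha0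
  set c := A.inf' hA (fun a => Real.log (α a)) - Real.log α0
  have hbound : ∀ x, c + ε * ‖x‖ ≤ Phi0e A α a0 α0 x := by
    intro x
    obtain ⟨b, hb, hbx⟩ := hsupport x
    have hpot := log_add_inner_le_pot hα hb x
    have hinf := inf'_le (fun a => Real.log (α a)) hb
    rw [Phi0e, log_f0e hα0]
    rw [real_inner_comm a0, real_inner_comm b] at hbx
    linarith
  exact tendsto_atTop_mono hbound <| tendsto_atTop_add_const_left _ c <|
    tendsto_norm_cocompact_atTop.const_mul_atTop hε

-- Any `α0 > 0` would do: `Φ0` only serves as a coercive function whose critical points solve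
-- `μ(x) = a0`.
theorem exists_mmap_eq_of_mem_interior_convexHull (hA : A.Nonempty) (hα : ∀ a ∈ A, 0 < α a)
    (ha0 : a0 ∈ interior (convexHull ℝ (A : Set (Vm m)))) : ∃ x, mmap A α x = a0 := by
  have hcont : Continuous (Phi0e A α a0 1) := continuous_iff_continuousAt.2 fun x =>
    (hasFDerivAt_Phi0e hA hα one_pos x).continuousAt
  obtain ⟨x, hx⟩ := hcont.exists_forall_le (tendsto_Phi0e_cocompact hA hα one_pos ha0)
  exact ⟨x, mmap_eq_of_isLocalMin_Phi0e hA hα one_pos (.of_forall hx)⟩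

theorem dotProduct_Gmat_mulVec (x : Vm m) (v : Fin m → ℝ) :
    v ⬝ᵥ Gmat A α x *ᵥ v = atForm A α x (WithLp.toLp 2 v) := by
  simp only [dotProduct, Matrix.mulVec, Gmat, atForm, Matrix.of_apply,
    EuclideanSpace.inner_eq_star_dotProduct]
  conv_rhs => simp only [star_trivial, sq, sum_mul, mul_sum]
  conv_lhs => simp only [mul_sum, sum_mul]
  refine (sum_congr rfl fun i _ => sum_comm).trans (sum_comm.trans ?_)
  exact sum_congr rfl fun a _ => sum_congr rfl fun i _ => sum_congr rfl fun j _ => by ring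

theorem atForm_pos (hA : A.Nonempty) (hα : ∀ a ∈ A, 0 < α a)
    (hspan : affineSpan ℝ (A : Set (Vm m)) = ⊤) (x : Vm m) {v : Vm m} (hv : v ≠ 0) :
    0 < atForm A α x v := by
  have hterm : ∀ a ∈ A, 0 ≤ wt A α a x * ⟪a - mmap A α x, v⟫ ^ 2 :=
    fun a ha => mul_nonneg (wt_pos hA hα ha x).le (sq_nonneg _)
  refine (sum_nonneg hterm).lt_of_ne fun hzero => hv ?_
  have horth : ∀ a ∈ A, ⟪v, a - mmap A α x⟫ = 0 := fun a ha => by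
    have := (sum_eq_zero_iff_of_nonneg hterm).1 hzero.symm a ha
    rw [real_inner_comm]
    simpa [(wt_pos hA hα ha x).ne'] using this
  have hker : vectorSpan ℝ (A : Set (Vm m)) ≤ LinearMap.ker (innerₛₗ ℝ v) := by
    refine Submodule.span_le.2 ?_
    rintro _ ⟨a, ha, b, hb, rfl⟩
    have hab : a -ᵥ b = (a - mmap A α x) - (b - mmap A α x) := by
      rw [vsub_eq_sub, sub_sub_sub_cancel_right]
    change ⟪v, a -ᵥ b⟫ = 0
    rw [hab, inner_sub_right, horth a ha, horth b hb, sub_zero]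
  rw [← direction_affineSpan, hspan, AffineSubspace.direction_top] at hker
  exact inner_self_eq_zero.1 (hker Submodule.mem_top)

theorem Gmat_posDef (hA : A.Nonempty) (hα : ∀ a ∈ A, 0 < α a)
    (hspan : affineSpan ℝ (A : Set (Vm m)) = ⊤) (x : Vm m) : (Gmat A α x).PosDef := by
  refine .of_dotProduct_mulVec_pos ?_ fun v hv => ?_
  · ext i j
    simp only [Matrix.conjTranspose_apply, Gmat, Matrix.of_apply, star_trivial, mul_comm]
  · rw [star_trivial, dotProduct_Gmat_mulVec]
    exact atForm_pos hA hα hspan x (by simpa using hv)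

theorem continuous_covK : Continuous (covK A α) := by
  unfold covK
  fun_prop

theorem continuous_wt (hA : A.Nonempty) (hα : ∀ a ∈ A, 0 < α a) (a : Vm m) :
    Continuous (wt A α a) :=
  (by fun_prop : Continuous fun x : Vm m => (α a) ^ 2 * Real.exp (2 * ⟪a, x⟫)).div
    continuous_covK fun x => (covK_pos hA hα x).ne'

theorem continuous_mmap (hA : A.Nonempty) (hα : ∀ a ∈ A, 0 < α a) : Continuous (mmap A α) := by
  have := continuous_wt hA hα
  unfold mmap
  fun_prop

theorem continuous_Gmat (hA : A.Nonempty) (hα : ∀ a ∈ A, 0 < α a) : Continuous (Gmat A α) := by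
  have := continuous_wt hA hα
  have := continuous_mmap hA hα
  exact continuous_matrix fun i j => by simp only [Gmat, Matrix.of_apply]; fun_prop

theorem continuous_qform (hA : A.Nonempty) (hα : ∀ a ∈ A, 0 < α a)
    (hspan : affineSpan ℝ (A : Set (Vm m)) = ⊤) : Continuous (qform A α a0) := by
  have hdev : Continuous fun x => WithLp.ofLp (mmap A α x - a0) := by
    have := continuous_mmap hA hα
    fun_prop
  have hinv : Continuous fun x => (Gmat A α x)⁻¹ := continuous_iff_continuousAt.2 fun x =>
    (continuousAt_matrix_inv _ (NormedRing.inverse_continuousAt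
      (Units.mk0 _ (Gmat_posDef hA hα hspan x).det_pos.ne'))).comp
      (continuous_Gmat hA hα).continuousAt
  exact hdev.dotProduct (hinv.matrix_mulVec hdev)

theorem continuous_PsiF (hA : A.Nonempty) (hα : ∀ a ∈ A, 0 < α a) (hα0 : 0 < α0)
    (hspan : affineSpan ℝ (A : Set (Vm m)) = ⊤) : Continuous (PsiF A α a0 α0) := by
  have hK0ne : ∀ x, K0e A α a0 α0 x ≠ 0 := fun x => (K0e_pos hA hα hα0 x).ne'
  have hf0 : Continuous (f0e a0 α0) := by
    unfold f0e
    fun_prop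
  have hK0 : Continuous (K0e A α a0 α0) := continuous_covK.add (hf0.pow 2)
  exact ((continuous_covK.div hK0 hK0ne).rpow_const fun _ => Or.inr (by positivity)).mul
    (continuous_const.add (((hf0.pow 2).div hK0 hK0ne).mul (continuous_qform hA hα hspan))).sqrt

theorem PsiF_lt_one_of_mmap_eq (hm : 1 ≤ m) (hA : A.Nonempty) (hα : ∀ a ∈ A, 0 < α a)
    (hα0 : 0 < α0) {x : Vm m} (hx : mmap A α x = a0) : PsiF A α a0 α0 x < 1 := by
  have hq : qform A α a0 x = 0 := by simp [qform, hx]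
  have hK0 := K0e_pos hA hα hα0 (a0 := a0) x
  rw [PsiF, hq, mul_zero, add_zero, Real.sqrt_one, mul_one]
  exact Real.rpow_lt_one (div_pos (covK_pos hA hα x) hK0).le
    ((div_lt_one hK0).2 (covK_lt_K0e hα0 x)) (div_pos (Nat.cast_pos.2 hm) two_pos)

/-- If `a0` lies in the interior of the Newton polytope
`P = conv(A)`, then `U₋ = {x : Ψ(x) < 1}` is a nonempty open subset of `ℝ^m`. -/
theorem statement6 (m : ℕ) (hm : 1 ≤ m) (A : Finset (Vm m)) (hA : A.Nonempty)
    (α : Vm m → ℝ) (hα : ∀ a ∈ A, 0 < α a)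
    (hspan : affineSpan ℝ (A : Set (Vm m)) = ⊤)
    (a0 : Vm m) (α0 : ℝ) (hα0 : 0 < α0)
    (ha0 : a0 ∈ interior (convexHull ℝ (A : Set (Vm m)))) :
    {x : Vm m | PsiF A α a0 α0 x < 1}.Nonempty ∧
    IsOpen {x : Vm m | PsiF A α a0 α0 x < 1} := by
  obtain ⟨x, hx⟩ := exists_mmap_eq_of_mem_interior_convexHull hA hα ha0
  exact ⟨⟨x, PsiF_lt_one_of_mmap_eq hm hA hα hα0 hx⟩,
    isOpen_lt (continuous_PsiF hA hα hα0 hspan) continuous_const⟩
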